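/- Suppose the main removal theorem holds: for all ε > 0 there exists δ₂(ε) > 0 such that any g : V^n → [0,1] that is ε-far from independent satisfies ⟨g, Ag⟩ > δ₂(ε). Suppose also the junta theorem holds: for all 0 < ε ≤ 1/2 there exist δ₁(ε) > 0 and j₁(ε) such that for any f : V^n → [0,1] with ⟨f, Af⟩ ≤ δ₁(ε) there exist J ⊆ [n] with |J| ≤ j₁(ε) and T' ⊆ V^J with E_{x∈V^J}[1_{¬T'}(x)·E[f(x,·)]] ≤ ε and ⟨1_{T'}, A 1_{T'}⟩ ≤ ε. Then for all ε > 0, any g : V^n → [0,1] with ⟨g, Ag⟩ < δ₁(δ₂(ε/2)) admits J ⊆ [n] with |J| ≤ j₁(δ₂(ε/2)) and a set T ⊆ V^J such that ⟨1_T, A 1_T⟩ = 0 (T is independent) and E_{x∈V^J}[1_{¬T}(x)·E[g(x,·)]] ≤ ε. -/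
import Mathlib


open Finset

variable {V : Type*} [Fintype V] [DecidableEq V]

/-- Product measure on `V^ι`. -/
def pmu (μ : V → ℝ) {ι : Type} [Fintype ι] (x : ι → V) : ℝ := ∏ i, μ (x i)

/-- The bilinear form `⟨f, A^{⊗ι} g⟩` on `V^ι`, w.r.t. the stationary product measure. -/
def ipow (μ : V → ℝ) (A : V → V → ℝ) {ι : Type} [Fintype ι] [DecidableEq ι]
    (f g : (ι → V) → ℝ) : ℝ :=
  ∑ x : ι → V, ∑ y : ι → V, pmu μ x * (∏ i, A (x i) (y i)) * f x * g y

/-- Expectation on `V^ι` w.r.t. the product measure. -/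
def expec (μ : V → ℝ) {ι : Type} [Fintype ι] [DecidableEq ι] (f : (ι → V) → ℝ) : ℝ :=
  ∑ x : ι → V, pmu μ x * f x

/-- Indicator function of a finite set. -/
def indic {α : Type*} [DecidableEq α] (T : Finset α) (x : α) : ℝ :=
  if x ∈ T then 1 else 0

/-- A set `U ⊆ V^ι` is independent if `⟨1_U, A 1_U⟩ = 0`. -/
def IsIndep (μ : V → ℝ) (A : V → V → ℝ) {ι : Type} [Fintype ι] [DecidableEq ι]
    (U : Finset (ι → V)) : Prop :=
  ipow μ A (indic U) (indic U) = 0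

/-- `g` is `ε`-far from independent. -/
def EpsFar (μ : V → ℝ) (A : V → V → ℝ) {ι : Type} [Fintype ι] [DecidableEq ι]
    (ε : ℝ) (g : (ι → V) → ℝ) : Prop :=
  ∀ U : Finset (ι → V), IsIndep μ A U →
    expec μ (fun x => (1 - indic U x) * g x) > ε

/-- `E_{x ∈ V^J}[1_{¬T}(x) · E[f(x,·)]]`: the mass of `f` not captured by the
junta set `T ⊆ V^J`. -/
def outsideMass (μ : V → ℝ) {n : ℕ} (f : (Fin n → V) → ℝ) (J : Finset (Fin n))
    (T : Finset ({i // i ∈ J} → V)) : ℝ :=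
  ∑ x : {i // i ∈ J} → V, (1 - indic T x) * (∏ i, μ (x i)) *
    ∑ z : Fin n → V, pmu μ z *
      f (fun i => if h : i ∈ J then x ⟨i, h⟩ else z i)

lemma sum_pmu_one (μ : V → ℝ) (hμ1 : ∑ v : V, μ v = 1) (ι : Type) [Fintype ι]
    [DecidableEq ι] : ∑ x : ι → V, pmu μ x = 1 := by
  unfold pmu
  rw [← Fintype.piFinset_univ, ← Finset.prod_univ_sum]
  simp [hμ1]

lemma indic_nonneg {α : Type*} [DecidableEq α] (T : Finset α) (x : α) : 0 ≤ indic T x := by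
  unfold indic; split <;> norm_num

lemma indic_le_one {α : Type*} [DecidableEq α] (T : Finset α) (x : α) : indic T x ≤ 1 := by
  unfold indic; split <;> norm_num

/-- From the removal theorem (applied over the empty index set) we deduce `δ₂ e < e`
for `0 < e < 1`. -/
lemma delta2_lt (μ : V → ℝ) (hμpos : ∀ v, 0 < μ v) (A : V → V → ℝ) (δ₂ : ℝ → ℝ)
    (hmain : ∀ ε : ℝ, 0 < ε → 0 < δ₂ ε ∧
      ∀ (ι : Type) (_ : Fintype ι) (_ : DecidableEq ι) (g : (ι → V) → ℝ),
        (∀ x, g x ∈ Set.Icc (0:ℝ) 1) → EpsFar μ A ε g → ipow μ A g g > δ₂ ε)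
    (e : ℝ) (he : 0 < e) (he1 : e < 1) : δ₂ e < e := by
  have hc0 : (0:ℝ) ≤ Real.sqrt e := Real.sqrt_nonneg e
  have hc1 : Real.sqrt e ≤ 1 := Real.sqrt_le_one.mpr he1.le
  have hec : e < Real.sqrt e := (Real.lt_sqrt he.le).mpr (by nlinarith)
  have hcc : Real.sqrt e * Real.sqrt e = e := Real.mul_self_sqrt he.le
  have hp : ∀ F : (Empty → V) → ℝ, ∑ x : Empty → V, F x = F (fun e => e.elim) := by
    intro F
    rw [Fintype.sum_unique]
    congr 1
    funext e
    exact e.elim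
  have hpmu : ∀ x : Empty → V, pmu μ x = 1 := by
    intro x; unfold pmu; simp
  have hfar : EpsFar μ A e (fun _ : Empty → V => Real.sqrt e) := by
    intro U hU
    have hU0 : ipow μ A (indic U) (indic U) = 0 := hU
    by_cases hx : (fun e : Empty => e.elim : Empty → V) ∈ U
    · exfalso
      have h1 : ipow μ A (indic U) (indic U) = 1 := by
        unfold ipow
        simp only [hp]
        simp [hpmu, indic, hx]
      rw [hU0] at h1
      norm_num at h1
    · have hval : (expec μ fun x : Empty → V =>
          (1 - indic U x) * (fun _ : Empty → V => Real.sqrt e) x) = Real.sqrt e := by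
        unfold expec
        simp only [hp]
        simp [hpmu, indic, hx]
      rw [hval]
      exact hec
  have hgt := (hmain e he).2 Empty inferInstance inferInstance
    (fun _ => Real.sqrt e) (fun x => Set.mem_Icc.mpr ⟨hc0, hc1⟩) hfar
  have hipow : ipow μ A (fun _ : Empty → V => Real.sqrt e)
      (fun _ : Empty → V => Real.sqrt e) = e := by
    unfold ipow
    simp only [hp]
    simp [hpmu, hcc]
  rw [hipow] at hgt
  exact hgt

theorem stmt_14
    (μ : V → ℝ) (hμpos : ∀ v, 0 < μ v) (hμ1 : ∑ v : V, μ v = 1)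
    (A : V → V → ℝ) (hA0 : ∀ x y, 0 ≤ A x y) (hAstoch : ∀ x, ∑ y : V, A x y = 1)
    (hrev : ∀ x y, μ x * A x y = μ y * A y x)
    (δ₁ δ₂ : ℝ → ℝ) (j₁ : ℝ → ℕ)
    -- the main removal theorem
    (hmain : ∀ ε : ℝ, 0 < ε → 0 < δ₂ ε ∧
      ∀ (ι : Type) (_ : Fintype ι) (_ : DecidableEq ι) (g : (ι → V) → ℝ),
        (∀ x, g x ∈ Set.Icc (0:ℝ) 1) → EpsFar μ A ε g → ipow μ A g g > δ₂ ε)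
    (hδ₂le : ∀ ε : ℝ, 0 < ε → δ₂ ε ≤ 1 / 2)
    -- the junta theorem
    (hjunta : ∀ ε : ℝ, 0 < ε → ε ≤ 1 / 2 → 0 < δ₁ ε ∧
      ∀ (n : ℕ) (f : (Fin n → V) → ℝ), (∀ x, f x ∈ Set.Icc (0:ℝ) 1) →
        ipow μ A f f ≤ δ₁ ε →
        ∃ (J : Finset (Fin n)) (T' : Finset ({i // i ∈ J} → V)),
          J.card ≤ j₁ ε ∧ outsideMass μ f J T' ≤ ε ∧
          ipow μ A (indic T') (indic T') ≤ ε) :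
    -- the conclusion (Corollary 3.2)
    ∀ ε : ℝ, 0 < ε → ∀ (n : ℕ) (g : (Fin n → V) → ℝ),
      (∀ x, g x ∈ Set.Icc (0:ℝ) 1) → ipow μ A g g < δ₁ (δ₂ (ε / 2)) →
      ∃ (J : Finset (Fin n)) (T : Finset ({i // i ∈ J} → V)),
        J.card ≤ j₁ (δ₂ (ε / 2)) ∧
        ipow μ A (indic T) (indic T) = 0 ∧
        outsideMass μ g J T ≤ ε := by
  intro ε hε n g hgb hglt
  have hε2 : 0 < ε / 2 := by linarith
  obtain ⟨hδ₂pos, hmain'⟩ := hmain (ε / 2) hε2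
  have hε'le : δ₂ (ε / 2) ≤ ε / 2 := by
    rcases lt_or_ge ε 2 with h | h
    · exact (delta2_lt μ hμpos A δ₂ hmain (ε / 2) hε2 (by linarith)).le
    · linarith [hδ₂le (ε / 2) hε2]
  obtain ⟨hδ₁pos, hjunta'⟩ := hjunta (δ₂ (ε / 2)) hδ₂pos (hδ₂le (ε / 2) hε2)
  obtain ⟨J, T', hJ, hout, hT'⟩ := hjunta' n g hgb hglt.le
  -- `1_{T'}` is not `ε/2`-far from independent
  have hnotfar : ¬ EpsFar μ A (ε / 2) (indic T') := by
    intro hfar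
    have := hmain' {i // i ∈ J} inferInstance inferInstance (indic T')
      (fun x => Set.mem_Icc.mpr ⟨indic_nonneg _ _, indic_le_one _ _⟩) hfar
    linarith
  unfold EpsFar at hnotfar
  push_neg at hnotfar
  obtain ⟨U, hUind, hUsmall⟩ := hnotfar
  have hUind0 : ipow μ A (indic U) (indic U) = 0 := hUind
  refine ⟨J, T' ∩ U, hJ, ?_, ?_⟩
  · -- T' ∩ U is independent
    have hle : ipow μ A (indic (T' ∩ U)) (indic (T' ∩ U)) ≤
        ipow μ A (indic U) (indic U) := by
      unfold ipow
      apply Finset.sum_le_sum; intro x _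
      apply Finset.sum_le_sum; intro y _
      have hP : 0 ≤ pmu μ x * ∏ i, A (x i) (y i) := by
        apply mul_nonneg
        · exact Finset.prod_nonneg fun i _ => (hμpos _).le
        · exact Finset.prod_nonneg fun i _ => hA0 _ _
      have h1 : indic (T' ∩ U) x ≤ indic U x := by
        unfold indic
        by_cases hx : x ∈ T' ∩ U
        · simp [hx, (Finset.mem_inter.mp hx).2]
        · simp only [hx, if_neg, not_false_iff]
          split <;> norm_num
      have h2 : indic (T' ∩ U) y ≤ indic U y := by
        unfold indic
        by_cases hy : y ∈ T' ∩ U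
        · simp [hy, (Finset.mem_inter.mp hy).2]
        · simp only [hy, if_neg, not_false_iff]
          split <;> norm_num
      exact mul_le_mul (mul_le_mul_of_nonneg_left h1 hP) h2 (indic_nonneg _ _)
        (mul_nonneg hP (indic_nonneg _ _))
    have hge : 0 ≤ ipow μ A (indic (T' ∩ U)) (indic (T' ∩ U)) := by
      unfold ipow
      apply Finset.sum_nonneg; intro x _
      apply Finset.sum_nonneg; intro y _
      apply mul_nonneg (mul_nonneg (mul_nonneg _ _) (indic_nonneg _ _)) (indic_nonneg _ _)
      · exact Finset.prod_nonneg fun i _ => (hμpos _).le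
      · exact Finset.prod_nonneg fun i _ => hA0 _ _
    linarith
  · -- the outside mass bound
    set h : ({i // i ∈ J} → V) → ℝ := fun x =>
      ∑ z : Fin n → V, pmu μ z * g (fun i => if hi : i ∈ J then x ⟨i, hi⟩ else z i) with hh
    have hh01 : ∀ x, 0 ≤ h x ∧ h x ≤ 1 := by
      intro x
      constructor
      · apply Finset.sum_nonneg; intro z _
        exact mul_nonneg (Finset.prod_nonneg fun i _ => (hμpos _).le) (hgb _).1
      · calc h x ≤ ∑ z : Fin n → V, pmu μ z * 1 := by
              apply Finset.sum_le_sum; intro z _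
              exact mul_le_mul_of_nonneg_left (hgb _).2
                (Finset.prod_nonneg fun i _ => (hμpos _).le)
          _ = 1 := by
              simp only [mul_one]
              exact sum_pmu_one μ hμ1 _
    have split : ∀ x : {i // i ∈ J} → V,
        1 - indic (T' ∩ U) x = (1 - indic T' x) + indic T' x * (1 - indic U x) := by
      intro x
      unfold indic
      by_cases h1 : x ∈ T' <;> by_cases h2 : x ∈ U <;>
        simp [Finset.mem_inter, h1, h2]
    have key : outsideMass μ g J (T' ∩ U) = outsideMass μ g J T' +
        ∑ x : {i // i ∈ J} → V, indic T' x * (1 - indic U x) * (∏ i, μ (x i)) * h x := by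
      unfold outsideMass
      rw [← Finset.sum_add_distrib]
      apply Finset.sum_congr rfl
      intro x _
      rw [split x]
      ring
    have hsec : ∑ x : {i // i ∈ J} → V, indic T' x * (1 - indic U x) * (∏ i, μ (x i)) * h x
        ≤ expec μ (fun x => (1 - indic U x) * indic T' x) := by
      unfold expec pmu
      apply Finset.sum_le_sum
      intro x _
      have hnn : 0 ≤ indic T' x * (1 - indic U x) * ∏ i, μ (x i) := by
        apply mul_nonneg (mul_nonneg (indic_nonneg _ _) (by linarith [indic_le_one U x]))
        exact Finset.prod_nonneg fun i _ => (hμpos _).le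
      calc indic T' x * (1 - indic U x) * (∏ i, μ (x i)) * h x
          ≤ indic T' x * (1 - indic U x) * (∏ i, μ (x i)) :=
            mul_le_of_le_one_right hnn (hh01 x).2
        _ = (∏ i, μ (x i)) * ((1 - indic U x) * indic T' x) := by ring
    rw [key]
    linarith [hout, hε'le, hsec, hUsmall]
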